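/- For every i ≥ 1, writing c = (3^i − 1)/2, the center point (c, 0) of stage u_i belongs to u_i, and the only points of the whole U fractal 𝐔 that are grid-adjacent to (c, 0) are (c−1, 0) and (c+1, 0); in particular (c, 1) ∉ 𝐔. -/
import Mathlib

abbrev Pt := ℤ × ℤ

def adjPt (p q : Pt) : Prop := |p.1 - q.1| + |p.2 - q.2| = 1

def GU : Set Pt := {(0,0),(0,1),(0,2),(1,0),(2,0),(2,1),(2,2)}

def scaleAddU (k : ℤ) (A B : Set Pt) : Set Pt :=
  {q | ∃ p ∈ A, ∃ g ∈ B, q = (p.1 + k * g.1, p.2 + k * g.2)}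

def ustage : ℕ → Set Pt
  | 0 => ∅
  | 1 => GU
  | n + 2 => scaleAddU (3 ^ (n + 1)) (ustage (n + 1)) GU

def UFractal : Set Pt := {p | ∃ i : ℕ, 1 ≤ i ∧ p ∈ ustage i}

lemma ustage_mod3 : ∀ j : ℕ, ∀ p : Pt, p ∈ ustage j → ¬ (p.1 % 3 = 1 ∧ p.2 % 3 = 1)
  | 0, p, hp => by simp [ustage] at hp
  | 1, p, hp => by
      simp [ustage, GU] at hp
      rcases hp with h|h|h|h|h|h|h <;> subst h <;> decide
  | (n+2), p, hp => by
      obtain ⟨q, hq, g, hg, rfl⟩ := hp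
      have hdvd : (3:ℤ) ∣ 3 ^ (n+1) := dvd_pow_self 3 (Nat.succ_ne_zero n)
      have h1 : (3:ℤ) ∣ 3 ^ (n+1) * g.1 := hdvd.mul_right _
      have h2 : (3:ℤ) ∣ 3 ^ (n+1) * g.2 := hdvd.mul_right _
      have IH := ustage_mod3 (n+1) q hq
      simp only [not_and] at IH ⊢
      intro ha hb
      exact absurd (by omega : q.2 % 3 = 1) (fun hc => (IH (by omega) hc))

lemma ustage_nonneg : ∀ j : ℕ, ∀ p : Pt, p ∈ ustage j → 0 ≤ p.1 ∧ 0 ≤ p.2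
  | 0, p, hp => by simp [ustage] at hp
  | 1, p, hp => by
      simp [ustage, GU] at hp
      rcases hp with h|h|h|h|h|h|h <;> subst h <;> exact ⟨by norm_num, by norm_num⟩
  | (n+2), p, hp => by
      obtain ⟨q, hq, g, hg, rfl⟩ := hp
      have hg' : 0 ≤ g.1 ∧ 0 ≤ g.2 := by
        simp [GU] at hg
        rcases hg with h|h|h|h|h|h|h <;> subst h <;> exact ⟨by norm_num, by norm_num⟩
      have IH := ustage_nonneg (n+1) q hq
      have hpow : (0:ℤ) ≤ 3 ^ (n+1) := by positivity
      constructor <;> simp only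
      · nlinarith [IH.1, hg'.1]
      · nlinarith [IH.2, hg'.2]

lemma c_succ (i : ℕ) : ((3:ℤ) ^ (i+1) - 1) / 2 = ((3:ℤ) ^ i - 1) / 2 + 3 ^ i := by
  have hodd : Odd ((3:ℤ) ^ i) := Odd.pow ⟨1, by ring⟩
  obtain ⟨k, hk⟩ := hodd
  have h1 : (3:ℤ) ^ (i+1) = 3 * 3 ^ i := by ring
  omega

lemma center_mem : ∀ i : ℕ, 1 ≤ i →
    ((((3:ℤ)^i - 1)/2 - 1, 0) : Pt) ∈ ustage i ∧
    ((((3:ℤ)^i - 1)/2, 0) : Pt) ∈ ustage i ∧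
    ((((3:ℤ)^i - 1)/2 + 1, 0) : Pt) ∈ ustage i := by
  intro i hi
  induction i, hi using Nat.le_induction with
  | base =>
      norm_num [ustage, GU]
  | succ i hi IH =>
      obtain ⟨n, rfl⟩ := Nat.exists_eq_add_of_le hi
      have hst : ustage (1 + n + 1) = scaleAddU (3 ^ (1 + n)) (ustage (1 + n)) GU := by
        have : 1 + n + 1 = n + 2 := by omega
        rw [this]
        have : 1 + n = n + 1 := by omega
        rw [this]
        rfl
      rw [hst]
      have hc := c_succ (1 + n)
      have h1 : ((1:ℤ),(0:ℤ)) ∈ GU := by simp [GU]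
      refine ⟨⟨_, IH.1, (1,0), h1, ?_⟩, ⟨_, IH.2.1, (1,0), h1, ?_⟩, ⟨_, IH.2.2, (1,0), h1, ?_⟩⟩ <;>
        simp only [Prod.mk.injEq] <;> constructor <;> omega

/-- For `i ≥ 1` and `c = (3^i − 1)/2`, the center point `(c, 0)`
belongs to `u_i`, the set of points of `𝐔` grid-adjacent to `(c, 0)` is exactly
`{(c − 1, 0), (c + 1, 0)}`; in particular `(c, 1) ∉ 𝐔`. -/
theorem uFractal_center_neighbors :
    ∀ i : ℕ, 1 ≤ i →
      (((((3 : ℤ) ^ i - 1) / 2, 0) : Pt) ∈ ustage i) ∧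
      {q ∈ UFractal | adjPt ((((3 : ℤ) ^ i - 1) / 2, 0) : Pt) q} =
        ({(((3 : ℤ) ^ i - 1) / 2 - 1, 0),
          (((3 : ℤ) ^ i - 1) / 2 + 1, 0)} : Set Pt) ∧
      ((((3 : ℤ) ^ i - 1) / 2, 1) : Pt) ∉ UFractal := by
  intro i hi
  set c : ℤ := ((3:ℤ)^i - 1)/2 with hc
  have hcm : c % 3 = 1 := by
    have hodd : Odd ((3:ℤ) ^ i) := Odd.pow ⟨1, by ring⟩
    obtain ⟨k, hk⟩ := hodd
    have h3 : (3:ℤ) ∣ 3 ^ i := dvd_pow_self 3 (by omega)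
    omega
  have hnot : ((c, 1) : Pt) ∉ UFractal := by
    rintro ⟨j, hj, hmem⟩
    exact ustage_mod3 j (c,1) hmem ⟨hcm, by norm_num⟩
  refine ⟨(center_mem i hi).2.1, ?_, hnot⟩
  ext q
  simp only [Set.mem_setOf_eq, Set.mem_insert_iff, Set.mem_singleton_iff]
  constructor
  · rintro ⟨hq, hadj⟩
    obtain ⟨j, hj, hmem⟩ := hq
    have hnn := ustage_nonneg j q hmem
    have hmod := ustage_mod3 j q hmem
    simp only [adjPt] at hadj
    have h2 : q.2 = 0 ∨ q.2 = 1 := by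
      rcases abs_cases ((0:ℤ) - q.2) with ⟨h, _⟩ | ⟨h, _⟩ <;>
      rcases abs_cases (c - q.1) with ⟨h', _⟩ | ⟨h', _⟩ <;> omega
    rcases h2 with h2 | h2
    · rw [h2] at hadj
      simp only [sub_zero, abs_zero, add_zero] at hadj
      rcases abs_cases (c - q.1) with ⟨h', _⟩ | ⟨h', _⟩
      · left; ext <;> simp <;> omega
      · right; ext <;> simp <;> omega
    · exfalso
      have h1 : q.1 = c := by
        rw [h2] at hadj
        rcases abs_cases (c - q.1) with ⟨h', _⟩ | ⟨h', _⟩ <;>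
          simp only [show |(0:ℤ) - 1| = 1 by norm_num] at hadj <;> omega
      exact hmod ⟨by omega, by omega⟩
  · rintro (rfl | rfl)
    · exact ⟨⟨i, hi, (center_mem i hi).1⟩, by simp [adjPt]⟩
    · exact ⟨⟨i, hi, (center_mem i hi).2.2⟩, by simp [adjPt]⟩
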